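/- arXiv:1206.3176 — 3 statements merged into one kernel-verified Lean document; each statement's English description precedes it below -/
import Mathlib

section
/- Let Ω ⊆ ℝ^{n+1} be a nonempty proper open convex cone, let F be a canonical potential of Ω, and let A be an invertible linear map of ℝ^{n+1}. Then A(Ω) is a nonempty proper open convex cone, and the function G : A(Ω) → ℝ defined by G(x) = F(A⁻¹x) − log|det A| is a canonical potential of A(Ω). -/
open scoped RealInnerProductSpace

noncomputable section

abbrev Euc (m : ℕ) : Type := EuclideanSpace ℝ (Fin m)

/-- The Hessian matrix of `F` at `x` in the standard coordinates. -/
def hessMatrix {m : ℕ} (F : Euc m → ℝ) (x : Euc m) : Matrix (Fin m) (Fin m) ℝ :=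
  fun i j => iteratedFDeriv ℝ 2 F x ![EuclideanSpace.single i 1, EuclideanSpace.single j 1]

/-- A nonempty proper open convex cone in `ℝ^m`. -/
def IsOpenProperConvexCone {m : ℕ} (Ω : Set (Euc m)) : Prop :=
  Ω.Nonempty ∧ IsOpen Ω ∧ Convex ℝ Ω ∧
    (∀ x ∈ Ω, ∀ t : ℝ, Real.exp t • x ∈ Ω) ∧
    ¬ ∃ p v : Euc m, v ≠ 0 ∧ ∀ t : ℝ, p + t • v ∈ closure Ω

/-- `F` tends to `+∞` along every sequence in `Ω` converging to a boundary point of `Ω`. -/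
def BlowsUpOnBoundary {m : ℕ} (Ω : Set (Euc m)) (F : Euc m → ℝ) : Prop :=
  ∀ z ∈ frontier Ω, ∀ x : ℕ → Euc m, (∀ k, x k ∈ Ω) →
    Filter.Tendsto x Filter.atTop (nhds z) →
    Filter.Tendsto (fun k => F (x k)) Filter.atTop Filter.atTop

/-- The canonical potential of a proper open convex cone `Ω ⊆ ℝ^{n+1}`. -/
def IsCanonicalPotential (n : ℕ) (Ω : Set (Euc (n+1))) (F : Euc (n+1) → ℝ) : Prop :=
  ContDiffOn ℝ (⊤ : ℕ∞) F Ω ∧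
  (∀ x ∈ Ω, (hessMatrix F x).PosDef) ∧
  (∀ x ∈ Ω, (hessMatrix F x).det = Real.exp (2 * F x)) ∧
  (∀ x ∈ Ω, ∀ t : ℝ, F (Real.exp t • x) = F x - (n + 1) * t) ∧
  BlowsUpOnBoundary Ω F

/-- The open dual cone of `Ω`. -/
def openDualCone {m : ℕ} (Ω : Set (Euc m)) : Set (Euc m) :=
  {y | ∀ x ∈ closure Ω, x ≠ 0 → 0 < ⟪x, y⟫}

open Matrix in
/-- auxiliary: sum of coordinates times basis vectors. -/
lemma euc_sum_single {m : ℕ} (u : Euc m) :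
    ∑ k, u k • EuclideanSpace.single k (1:ℝ) = u := by
  have h := (EuclideanSpace.basisFun (Fin m) ℝ).toBasis.sum_repr u
  simpa using h

/-- auxiliary: expansion of a continuous bilinear map in coordinates. -/
lemma bilin_expand {m : ℕ} (T : ContinuousMultilinearMap ℝ (fun _ : Fin 2 => Euc m) ℝ)
    (u v : Euc m) :
    T ![u, v] = ∑ k, ∑ l, u k * v l *
      T ![EuclideanSpace.single k 1, EuclideanSpace.single l 1] := by
  classical
  set g : ∀ _ : Fin 2, Fin m → Euc m :=
    ![fun k => u k • EuclideanSpace.single k 1, fun k => v k • EuclideanSpace.single k 1] with hg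
  have h0 : ![u, v] = fun i => ∑ j : Fin m, g i j := by
    funext i
    fin_cases i <;> simp [hg, euc_sum_single]
  rw [h0]
  have h1 := T.toMultilinearMap.map_sum g
  simp only [ContinuousMultilinearMap.coe_coe] at h1
  rw [h1]
  have h2 : ∀ r : Fin 2 → Fin m,
      T (fun i => g i (r i)) = (u (r 0) * v (r 1)) •
        T ![EuclideanSpace.single (r 0) 1, EuclideanSpace.single (r 1) 1] := by
    intro r
    have he : (fun i => g i (r i)) = fun i =>
        (![u (r 0), v (r 1)] : Fin 2 → ℝ) i •
          (![EuclideanSpace.single (r 0) 1, EuclideanSpace.single (r 1) 1] : Fin 2 → Euc m) i := by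
      funext i
      fin_cases i <;> simp [hg]
    rw [he]
    have := T.toMultilinearMap.map_smul_univ
      (![u (r 0), v (r 1)] : Fin 2 → ℝ)
      (![EuclideanSpace.single (r 0) 1, EuclideanSpace.single (r 1) 1] : Fin 2 → Euc m)
    simpa [Fin.prod_univ_two] using this
  simp only [h2]
  rw [← Equiv.sum_comp (finTwoArrowEquiv (Fin m)).symm]
  rw [Fintype.sum_prod_type]
  simp [finTwoArrowEquiv, smul_eq_mul, mul_comm]

open Matrix in
/-- auxiliary: congruence preserves positive definiteness. -/
lemma posdef_conj {m : ℕ} {H : Matrix (Fin m) (Fin m) ℝ} (hH : H.PosDef)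
    {M : Matrix (Fin m) (Fin m) ℝ} (hM : M.det ≠ 0) : (Mᵀ * H * M).PosDef := by
  have hMt : Mᵀ = Mᴴ := (Matrix.conjTranspose_eq_transpose_of_trivial M).symm
  constructor
  · rw [hMt]
    exact Matrix.isHermitian_conjTranspose_mul_mul M hH.1
  · have h2 : ∀ ⦃x : Fin m → ℝ⦄, x ≠ 0 → 0 < star x ⬝ᵥ ((Mᵀ * H * M) *ᵥ x) := by
     intro x hx
     have hinj : Function.Injective (M.mulVec) :=
       Matrix.mulVec_injective_iff_isUnit.mpr
        ((Matrix.isUnit_iff_isUnit_det M).mpr (isUnit_iff_ne_zero.mpr hM))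
     have hMx : M *ᵥ x ≠ 0 := by
      intro h
      exact hx (hinj (by simpa using h))
     have := hH.dotProduct_mulVec_pos hMx
     rw [hMt]
     simpa only [Matrix.star_mulVec, Matrix.dotProduct_mulVec, Matrix.vecMul_vecMul] using this
    exact (Matrix.posDef_iff_dotProduct_mulVec.mpr ⟨by rw [hMt]; exact Matrix.isHermitian_conjTranspose_mul_mul M hH.1, h2⟩).2

open Matrix in
/-- auxiliary: transformation of the Hessian matrix under a linear change of variables. -/
lemma hess_transform {m : ℕ} {Ω : Set (Euc m)} (hopen : IsOpen Ω) {F : Euc m → ℝ}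
    (hF : ContDiffOn ℝ (⊤ : ℕ∞) F Ω) (B : Euc m ≃L[ℝ] Euc m) (c : ℝ) {x : Euc m} (hx : B x ∈ Ω) :
    hessMatrix (fun y => F (B y) - c) x =
      (Matrix.of fun k i => B (EuclideanSpace.single i 1) k)ᵀ * hessMatrix F (B x) *
      (Matrix.of fun k i => B (EuclideanSpace.single i 1) k) := by
  classical
  set M : Matrix (Fin m) (Fin m) ℝ := Matrix.of fun k i => B (EuclideanSpace.single i 1) k with hM
  set s : Set (Euc m) := ⇑B ⁻¹' Ω with hs
  have hsopen : IsOpen s := hopen.preimage B.continuous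
  have hxs : x ∈ s := hx
  have hcomp : ContDiffOn ℝ 2 (F ∘ ⇑B) s :=
    (hF.comp (B.contDiff.contDiffOn) (fun y hy => hy)).of_le (WithTop.coe_le_coe.mpr le_top)
  have key : iteratedFDeriv ℝ 2 (fun y => F (B y) - c) x =
      (iteratedFDeriv ℝ 2 F (B x)).compContinuousLinearMap
        (fun _ => (B : Euc m →L[ℝ] Euc m)) := by
    rw [← iteratedFDerivWithin_of_isOpen 2 hsopen hxs]
    have e1 : (fun y => F (B y) - c) =
        (fun y => (F ∘ ⇑B) y + (fun _ : Euc m => -c) y) := by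
      funext y
      simp [sub_eq_add_neg, Function.comp]
    rw [e1, iteratedFDerivWithin_add_apply' (hcomp x hxs) (contDiffOn_const x hxs) hsopen.uniqueDiffOn hxs,
      iteratedFDerivWithin_const_of_ne (n := 2) (by norm_num) _ s, Pi.zero_apply]
    rw [add_zero]
    rw [B.iteratedFDerivWithin_comp_right F hopen.uniqueDiffOn hx 2]
    rw [iteratedFDerivWithin_of_isOpen 2 hopen hx]
  funext i j
  show iteratedFDeriv ℝ 2 (fun y => F (B y) - c) x ![_, _] = _
  rw [key]
  rw [ContinuousMultilinearMap.compContinuousLinearMap_apply]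
  have harg : (fun k => (B : Euc m →L[ℝ] Euc m)
      ((![EuclideanSpace.single i 1, EuclideanSpace.single j 1] : Fin 2 → Euc m) k)) =
      ![B (EuclideanSpace.single i 1), B (EuclideanSpace.single j 1)] := by
    funext k
    fin_cases k <;> simp
  rw [harg, bilin_expand]
  rw [Matrix.mul_apply]
  simp only [Matrix.mul_apply, Matrix.transpose_apply, Finset.sum_mul]
  rw [Finset.sum_comm]
  apply Finset.sum_congr rfl
  intro k _
  apply Finset.sum_congr rfl
  intro l _
  simp only [hessMatrix, hM, Matrix.of_apply]
  ring

open Matrix in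
/-- The image of a proper open convex cone under an invertible linear map is a proper open
convex cone, and the canonical potential transforms by subtracting `log |det A|`. -/
theorem canonical_potential_image_linearEquiv
    (n : ℕ) (Ω : Set (Euc (n + 1))) (hΩ : IsOpenProperConvexCone Ω)
    (F : Euc (n + 1) → ℝ) (hF : IsCanonicalPotential n Ω F)
    (A : Euc (n + 1) ≃ₗ[ℝ] Euc (n + 1)) :
    IsOpenProperConvexCone (A '' Ω) ∧
    IsCanonicalPotential n (A '' Ω)
      (fun x => F (A.symm x) - Real.log |LinearMap.det (A : Euc (n + 1) →ₗ[ℝ] Euc (n + 1))|) := by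
  classical
  obtain ⟨hne, hopen, hconv, hcone, hline⟩ := hΩ
  obtain ⟨hF1, hF2, hF3, hF4, hF5⟩ := hF
  set d : ℝ := LinearMap.det (A : Euc (n + 1) →ₗ[ℝ] Euc (n + 1)) with hd
  set c : ℝ := Real.log |d| with hc
  -- the continuous linear equivalence associated with A
  set AC : Euc (n + 1) ≃L[ℝ] Euc (n + 1) := A.toContinuousLinearEquiv with hAC
  have hACcoe : (⇑AC : Euc (n + 1) → Euc (n + 1)) = ⇑A := rfl
  have hACscoe : (⇑AC.symm : Euc (n + 1) → Euc (n + 1)) = ⇑A.symm := rfl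
  -- membership in the image
  have himg : ∀ x : Euc (n + 1), x ∈ ⇑A '' Ω ↔ A.symm x ∈ Ω := by
    intro x
    rw [A.image_eq_preimage_symm]
    rfl
  -- determinant facts
  have hdinv : LinearMap.det (A.symm : Euc (n + 1) →ₗ[ℝ] Euc (n + 1)) * d = 1 := by
    rw [hd, ← LinearMap.det_comp]
    have : (A.symm : Euc (n + 1) →ₗ[ℝ] Euc (n + 1)) ∘ₗ (A : Euc (n + 1) →ₗ[ℝ] Euc (n + 1)) =
        LinearMap.id := by
      ext y
      simp
    rw [this, LinearMap.det_id]
  have hdne : d ≠ 0 := by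
    intro h
    rw [h, mul_zero] at hdinv
    exact zero_ne_one hdinv
  have hdsne : LinearMap.det (A.symm : Euc (n + 1) →ₗ[ℝ] Euc (n + 1)) = d⁻¹ :=
    eq_inv_of_mul_eq_one_left hdinv
  -- openness of the image
  have hopen' : IsOpen (⇑A '' Ω) := by
    rw [A.image_eq_preimage_symm]
    exact hopen.preimage AC.symm.continuous
  -- closure of the image
  have hclos : closure (⇑A '' Ω) = ⇑A '' closure Ω :=
    (AC.toHomeomorph.image_closure Ω).symm
  refine ⟨⟨hne.image _, hopen', hconv.linear_image (A : Euc (n + 1) →ₗ[ℝ] Euc (n + 1)), ?_, ?_⟩,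
    ?_, ?_, ?_, ?_, ?_⟩
  · -- cone property
    rintro x ⟨y, hy, rfl⟩ t
    exact ⟨Real.exp t • y, hcone y hy t, by simp⟩
  · -- no line in the closure
    rintro ⟨p, v, hv, hpv⟩
    refine hline ⟨A.symm p, A.symm v, ?_, ?_⟩
    · simpa using hv
    · intro t
      have h1 : p + t • v ∈ ⇑A '' closure Ω := by
        rw [← hclos]; exact hpv t
      obtain ⟨w, hw, hw'⟩ := h1
      have h2 : A.symm (p + t • v) = w := by
        rw [← hw']
        simp
      have h3 : A.symm p + t • A.symm v = w := by
        rw [← h2]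
        simp
      rw [h3]
      exact hw
  · -- smoothness
    apply ContDiffOn.sub _ contDiffOn_const
    have hs : ContDiff ℝ (⊤ : ℕ∞) (⇑A.symm : Euc (n + 1) → Euc (n + 1)) := by
      rw [← hACscoe]
      exact AC.symm.contDiff
    have := hF1.comp hs.contDiffOn (fun x hx => (himg x).mp hx)
    exact this
  · -- positive definiteness of the Hessian
    intro x hx
    have hx' : AC.symm x ∈ Ω := (himg x).mp hx
    have h := hess_transform hopen hF1 AC.symm c hx'
    have hGg : (fun y => F (A.symm y) - c) = (fun y => F (AC.symm y) - c) := rfl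
    rw [hGg, h]
    apply posdef_conj (hF2 _ hx')
    -- determinant of the coordinate matrix of A.symm
    have hMd : (Matrix.of fun k i => AC.symm (EuclideanSpace.single i 1) k).det =
        LinearMap.det (A.symm : Euc (n + 1) →ₗ[ℝ] Euc (n + 1)) := by
      rw [← LinearMap.det_toMatrix (EuclideanSpace.basisFun (Fin (n + 1)) ℝ).toBasis
        (A.symm : Euc (n + 1) →ₗ[ℝ] Euc (n + 1))]
      congr 1
      try ext i j
      try simp [LinearMap.toMatrix_apply, hACscoe]
    rw [hMd, hdsne]
    exact inv_ne_zero hdne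
  · -- Monge–Ampère equation
    intro x hx
    have hx' : AC.symm x ∈ Ω := (himg x).mp hx
    have h := hess_transform hopen hF1 AC.symm c hx'
    have hGg : (fun y => F (A.symm y) - c) = (fun y => F (AC.symm y) - c) := rfl
    have hMd : (Matrix.of fun k i => AC.symm (EuclideanSpace.single i 1) k).det =
        LinearMap.det (A.symm : Euc (n + 1) →ₗ[ℝ] Euc (n + 1)) := by
      rw [← LinearMap.det_toMatrix (EuclideanSpace.basisFun (Fin (n + 1)) ℝ).toBasis
        (A.symm : Euc (n + 1) →ₗ[ℝ] Euc (n + 1))]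
      congr 1
      try ext i j
      try simp [LinearMap.toMatrix_apply, hACscoe]
    show (hessMatrix (fun y => F (A.symm y) - c) x).det = _
    rw [hGg, h, Matrix.det_mul, Matrix.det_mul, Matrix.det_transpose, hMd, hdsne]
    have hFd : (hessMatrix F (AC.symm x)).det = Real.exp (2 * F (AC.symm x)) :=
      hF3 _ hx'
    rw [hFd]
    have hy : (AC.symm x : Euc (n + 1)) = A.symm x := rfl
    rw [hy]
    have hexp : Real.exp (2 * (F (A.symm x) - c)) =
        Real.exp (2 * F (A.symm x)) / (d * d) := by
      rw [mul_sub, Real.exp_sub]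
      congr 1
      rw [show (2:ℝ) * c = c + c by ring, Real.exp_add, hc,
        Real.exp_log (abs_pos.mpr hdne)]
      exact abs_mul_abs_self d
    show d⁻¹ * Real.exp (2 * F (A.symm x)) * d⁻¹ = Real.exp (2 * (F (A.symm x) - c))
    rw [hexp]
    field_simp
    try ring
  · -- homogeneity
    rintro x hx t
    have hx' : A.symm x ∈ Ω := (himg x).mp hx
    have hsm : A.symm (Real.exp t • x) = Real.exp t • A.symm x := by simp
    show F (A.symm (Real.exp t • x)) - c = (F (A.symm x) - c) - (↑n + 1) * t
    rw [hsm, hF4 _ hx' t]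
    ring
  · -- blow-up at the boundary
    intro z hz x hxk hxz
    have hz' : A.symm z ∈ frontier Ω := by
      have h1 : frontier (⇑A '' Ω) = ⇑A '' frontier Ω :=
        (AC.toHomeomorph.image_frontier Ω).symm
      rw [h1] at hz
      obtain ⟨w, hw, hw'⟩ := hz
      have : A.symm z = w := by rw [← hw']; simp
      rw [this]; exact hw
    have hconv : Filter.Tendsto (fun k => A.symm (x k)) Filter.atTop (nhds (A.symm z)) := by
      have hcont : Continuous (⇑A.symm : Euc (n + 1) → Euc (n + 1)) := by
        rw [← hACscoe]; exact AC.symm.continuous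
      exact (hcont.tendsto z).comp hxz
    have hmem : ∀ k, A.symm (x k) ∈ Ω := fun k => (himg (x k)).mp (hxk k)
    have h := hF5 (A.symm z) hz' (fun k => A.symm (x k)) hmem hconv
    have : Filter.Tendsto (fun k => F (A.symm (x k)) - c) Filter.atTop Filter.atTop :=
      Filter.tendsto_atTop_add_const_right _ (-c) h |>.congr (fun k => by ring)
    exact this
end
end

section
/- Let α < 0, let Ω ⊆ ℝ^{n+1} and I ⊆ ℝ be nonempty open sets with I a connected interval, and let F : Ω → ℝ be C^∞ with F(e^t x) = F(x) + αt whenever x ∈ Ω, t ∈ ℝ and e^t x ∈ Ω. Set Ω_I = Ω ∩ F⁻¹(I), assume I ⊆ F(Ω_I), assume the Hessian D²F(x) is positive definite for every x ∈ Ω_I, and assume there is a nowhere-vanishing function φ : I → ℝ with det D²F(x) = φ(F(x)) for every x ∈ Ω_I. Then there exists a constant B > 0 such that φ(r) = B·e^{−2(n+1)r/α} for every r ∈ I. -/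
open scoped RealInnerProductSpace

noncomputable section

section Aux

variable {E G : Type*} [NormedAddCommGroup E] [NormedSpace ℝ E]
  [NormedAddCommGroup G] [NormedSpace ℝ G]

lemma aux_cle_comp_right (g : E ≃L[ℝ] E) (f : E → G) (x : E) (i : ℕ) :
    iteratedFDeriv ℝ i (f ∘ g) x =
      (iteratedFDeriv ℝ i f (g x)).compContinuousLinearMap fun _ => (g : E →L[ℝ] E) := by
  have h := g.iteratedFDerivWithin_comp_right (s := Set.univ) f uniqueDiffOn_univ
    (Set.mem_univ (g x)) i
  simpa [Set.preimage_univ, iteratedFDerivWithin_univ] using h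

lemma aux_congr_nhds {f₁ f : E → G} {x : E} (h : f₁ =ᶠ[nhds x] f) (i : ℕ) :
    iteratedFDeriv ℝ i f₁ x = iteratedFDeriv ℝ i f x := by
  simp only [← iteratedFDerivWithin_univ]
  exact Filter.EventuallyEq.iteratedFDerivWithin_eq
    (h.filter_mono nhdsWithin_le_nhds) h.self_of_nhds i

lemma aux_add_const (f : E → ℝ) (c : ℝ) (x : E) :
    iteratedFDeriv ℝ 2 (fun y => f y + c) x = iteratedFDeriv ℝ 2 f x := by
  have h1 : fderiv ℝ (fun y => f y + c) = fderiv ℝ f := funext fun y => fderiv_add_const c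
  ext m
  rw [iteratedFDeriv_two_apply, iteratedFDeriv_two_apply, h1]

end Aux

lemma aux_hess_scaling {n : ℕ} {α : ℝ} {Ω : Set (Euc (n+1))} (hΩo : IsOpen Ω)
    {F : Euc (n+1) → ℝ}
    (hhom : ∀ x ∈ Ω, ∀ t : ℝ, Real.exp t • x ∈ Ω → F (Real.exp t • x) = F x + α * t)
    (t : ℝ) {x : Euc (n+1)} (hx : x ∈ Ω) (hx' : Real.exp t • x ∈ Ω) :
    hessMatrix F x = (Real.exp t ^ 2) • hessMatrix F (Real.exp t • x) := by
  set c := Real.exp t with hc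
  have hc0 : c ≠ 0 := Real.exp_ne_zero t
  let g : Euc (n+1) ≃L[ℝ] Euc (n+1) :=
    (LinearEquiv.smulOfNeZero ℝ (Euc (n+1)) c hc0).toContinuousLinearEquiv
  have hg : ∀ y, g y = c • y := fun y => rfl
  have hW : Ω ∩ (fun y : Euc (n+1) => c • y) ⁻¹' Ω ∈ nhds x :=
    (hΩo.inter (hΩo.preimage (continuous_const_smul c))).mem_nhds ⟨hx, hx'⟩
  have hFg : (F ∘ g) =ᶠ[nhds x] fun y => F y + α * t := by
    filter_upwards [hW] with y hy
    show F (g y) = F y + α * t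
    rw [hg]
    exact hhom y hy.1 t hy.2
  ext i j
  have h1 : hessMatrix F x i j = iteratedFDeriv ℝ 2 (F ∘ g) x
      ![EuclideanSpace.single i 1, EuclideanSpace.single j 1] := by
    rw [hessMatrix, aux_congr_nhds hFg 2, aux_add_const]
  rw [Matrix.smul_apply, smul_eq_mul, h1, aux_cle_comp_right]
  rw [ContinuousMultilinearMap.compContinuousLinearMap_apply]
  have h2 : (fun k => (g : Euc (n+1) →L[ℝ] Euc (n+1))
        (![EuclideanSpace.single i 1, EuclideanSpace.single j 1] k))
      = fun k => c • (![EuclideanSpace.single i 1, EuclideanSpace.single j 1] k) := by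
    funext k; exact hg _
  rw [h2, ContinuousMultilinearMap.map_smul_univ]
  simp [hessMatrix, hg, smul_eq_mul, sq]


lemma aux_det_scaling {n : ℕ} {α : ℝ} {Ω : Set (Euc (n+1))} (hΩo : IsOpen Ω)
    {F : Euc (n+1) → ℝ}
    (hhom : ∀ x ∈ Ω, ∀ t : ℝ, Real.exp t • x ∈ Ω → F (Real.exp t • x) = F x + α * t)
    (t : ℝ) {x : Euc (n+1)} (hx : x ∈ Ω) (hx' : Real.exp t • x ∈ Ω) :
    (hessMatrix F x).det
      = Real.exp ((2 * (n+1) : ℕ) * t) * (hessMatrix F (Real.exp t • x)).det := by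
  rw [aux_hess_scaling hΩo hhom t hx hx', Matrix.det_smul]
  congr 1
  rw [Real.exp_nat_mul]
  simp [Fintype.card_fin]
  ring

/-- If an `α`-logarithmically homogeneous function with positive definite Hessian on
`Ω_I = Ω ∩ F⁻¹(I)` satisfies `det D²F = φ(F)` there for a nowhere-vanishing `φ`, then
`φ(r) = B e^{-2(n+1)r/α}` on `I` for some constant `B > 0`. -/
theorem hessian_det_of_level_set_affine_spheres
    (n : ℕ) (α : ℝ) (hα : α < 0)
    (Ω : Set (Euc (n + 1))) (hΩo : IsOpen Ω) (hΩne : Ω.Nonempty)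
    (I : Set ℝ) (hIo : IsOpen I) (hIne : I.Nonempty) (hIc : I.OrdConnected)
    (F : Euc (n + 1) → ℝ) (hF : ContDiffOn ℝ (⊤ : ℕ∞) F Ω)
    (hhom : ∀ x ∈ Ω, ∀ t : ℝ, Real.exp t • x ∈ Ω →
      F (Real.exp t • x) = F x + α * t)
    (ΩI : Set (Euc (n + 1))) (hΩI : ΩI = Ω ∩ F ⁻¹' I)
    (hsurj : I ⊆ F '' ΩI)
    (hpos : ∀ x ∈ ΩI, (hessMatrix F x).PosDef)
    (φ : ℝ → ℝ) (hφ : ∀ r ∈ I, φ r ≠ 0)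
    (hdet : ∀ x ∈ ΩI, (hessMatrix F x).det = φ (F x)) :
    ∃ B : ℝ, 0 < B ∧ ∀ r ∈ I, φ r = B * Real.exp (-2 * (n + 1) * r / α) := by
  have hα0 : α ≠ 0 := ne_of_lt hα
  set K : ℝ := ((2 * (n + 1) : ℕ) : ℝ) with hK
  set ψ : ℝ → ℝ := fun r => φ r * Real.exp (K * r / α) with hψ
  -- local constancy of ψ on I
  have key : ∀ r ∈ I, ∃ U : Set ℝ, IsOpen U ∧ r ∈ U ∧ ∀ s ∈ U ∩ I, ψ s = ψ r := by
    intro r hr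
    obtain ⟨x, hxΩI, hFx⟩ := hsurj hr
    have hxΩ : x ∈ Ω := (hΩI ▸ hxΩI).1
    have hcont : Continuous fun s : ℝ => Real.exp ((s - r) / α) • x :=
      ((Real.continuous_exp.comp ((continuous_id.sub continuous_const).div_const α)).smul
        continuous_const)
    refine ⟨(fun s : ℝ => Real.exp ((s - r) / α) • x) ⁻¹' Ω, hΩo.preimage hcont, ?_, ?_⟩
    · show Real.exp ((r - r) / α) • x ∈ Ω
      simpa using hxΩ
    · rintro s ⟨hsU, hsI⟩
      set t : ℝ := (s - r) / α with ht
      have hsx : Real.exp t • x ∈ Ω := hsU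
      have hFs : F (Real.exp t • x) = s := by
        rw [hhom x hxΩ t hsx, hFx, ht]
        field_simp
        ring
      have hxΩI' : Real.exp t • x ∈ ΩI := by
        rw [hΩI]; exact ⟨hsx, by simp [Set.mem_preimage, hFs, hsI]⟩
      have hsc := aux_det_scaling hΩo hhom t hxΩ hsx
      rw [hdet x hxΩI, hdet _ hxΩI', hFx, hFs] at hsc
      -- hsc : φ r = Real.exp (K * t) * φ s
      have hexp : Real.exp (K * s / α) = Real.exp (K * r / α) * Real.exp (K * t) := by
        rw [← Real.exp_add]
        congr 1
        rw [ht]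
        field_simp
        ring
      show φ s * Real.exp (K * s / α) = φ r * Real.exp (K * r / α)
      rw [hexp, hsc]
      ring
  obtain ⟨r₀, hr₀⟩ := hIne
  -- ψ is constant on I
  have hconst : ∀ r ∈ I, ψ r = ψ r₀ := by
    by_contra hcon
    push_neg at hcon
    obtain ⟨r₁, hr₁I, hr₁⟩ := hcon
    set S : Set ℝ := {r | r ∈ I ∧ ψ r = ψ r₀} with hS
    set T : Set ℝ := {r | r ∈ I ∧ ψ r ≠ ψ r₀} with hT
    have hSopen : IsOpen S := by
      rw [isOpen_iff_forall_mem_open]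
      rintro r ⟨hrI, hrψ⟩
      obtain ⟨U, hUo, hrU, hUc⟩ := key r hrI
      exact ⟨U ∩ I, fun s hs => ⟨hs.2, (hUc s hs).trans hrψ⟩, hUo.inter hIo, hrU, hrI⟩
    have hTopen : IsOpen T := by
      rw [isOpen_iff_forall_mem_open]
      rintro r ⟨hrI, hrψ⟩
      obtain ⟨U, hUo, hrU, hUc⟩ := key r hrI
      exact ⟨U ∩ I, fun s hs => ⟨hs.2, (hUc s hs).symm ▸ hrψ⟩, hUo.inter hIo, hrU, hrI⟩
    have hpre : IsPreconnected I := hIc.isPreconnected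
    obtain ⟨z, hzI, hzS, hzT⟩ := hpre S T hSopen hTopen
      (fun r hr => by by_cases h : ψ r = ψ r₀
                      · exact Or.inl ⟨hr, h⟩
                      · exact Or.inr ⟨hr, h⟩)
      ⟨r₀, hr₀, hr₀, rfl⟩ ⟨r₁, hr₁I, hr₁I, hr₁⟩
    exact hzT.2 hzS.2
  -- positivity of ψ r₀
  obtain ⟨x₀, hx₀ΩI, hFx₀⟩ := hsurj hr₀
  have hφr₀ : 0 < φ r₀ := by
    have := (hpos x₀ hx₀ΩI).det_pos
    rwa [hdet x₀ hx₀ΩI, hFx₀] at this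
  refine ⟨ψ r₀, mul_pos hφr₀ (Real.exp_pos _), ?_⟩
  intro r hr
  have h := hconst r hr
  have hE : Real.exp (K * r / α) ≠ 0 := Real.exp_ne_zero _
  have hexp2 : Real.exp (-2 * (n + 1) * r / α) = (Real.exp (K * r / α))⁻¹ := by
    rw [← Real.exp_neg]
    congr 1
    rw [hK]
    push_cast
    ring
  rw [hexp2, ← h]
  show φ r = φ r * Real.exp (K * r / α) * (Real.exp (K * r / α))⁻¹
  field_simp
end
end

section
/- Let Ω ⊆ ℝ^{n+1} be an open cone (e^t x ∈ Ω for all x ∈ Ω, t ∈ ℝ), let ν > 0, and let F : Ω → ℝ be a C² function with positive semidefinite Hessian satisfying F(e^t x) = F(x) − νt for all x ∈ Ω and t ∈ ℝ. Then for every x ∈ Ω and every v ∈ ℝ^{n+1}: (DF(x)[v])² ≤ ν · D²F(x)[v,v]. -/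
open scoped RealInnerProductSpace

noncomputable section

/-- A `ν`-logarithmically homogeneous `C²` function with positive semidefinite Hessian on
an open cone satisfies `(DF(x)[v])² ≤ ν · D²F(x)[v,v]`. -/
theorem log_homogeneous_barrier_parameter_bound
    (n : ℕ) (Ω : Set (Euc (n + 1))) (hΩo : IsOpen Ω)
    (hcone : ∀ x ∈ Ω, ∀ t : ℝ, Real.exp t • x ∈ Ω)
    (ν : ℝ) (hν : 0 < ν)
    (F : Euc (n + 1) → ℝ) (hF : ContDiffOn ℝ 2 F Ω)
    (hsemi : ∀ x ∈ Ω, (hessMatrix F x).PosSemidef)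
    (hhom : ∀ x ∈ Ω, ∀ t : ℝ, F (Real.exp t • x) = F x - ν * t) :
    ∀ x ∈ Ω, ∀ v : Euc (n + 1),
      (fderiv ℝ F x v) ^ 2 ≤ ν * iteratedFDeriv ℝ 2 F x ![v, v] := by
  intro x hx v
  have hx_nhds : Ω ∈ nhds x := hΩo.mem_nhds hx
  have hFx : ContDiffAt ℝ 2 F x := hF.contDiffAt hx_nhds
  set B := fderiv ℝ (fderiv ℝ F) x with hBdef
  have hsym : ∀ u w, B u w = B w u := hFx.isSymmSndFDerivAt (by simp)
  have hdiff : ∀ y ∈ Ω, DifferentiableAt ℝ F y := fun y hy =>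
    (hF.contDiffAt (hΩo.mem_nhds hy)).differentiableAt two_ne_zero
  -- the curve t ↦ exp t • x
  have hc : HasDerivAt (fun t : ℝ => Real.exp t • x) x 0 := by
    have := (Real.hasDerivAt_exp 0).smul_const x
    simpa using this
  -- Euler identity 1 : fderiv F x x = -ν
  have euler1 : fderiv ℝ F x x = -ν := by
    have h1 : HasDerivAt (fun t : ℝ => F (Real.exp t • x)) (fderiv ℝ F x x) 0 := by
      have hFd : HasFDerivAt F (fderiv ℝ F x) ((fun t : ℝ => Real.exp t • x) 0) := by
        simpa using (hdiff x hx).hasFDerivAt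
      simpa [Function.comp_def] using hFd.comp_hasDerivAt 0 hc
    have h2 : HasDerivAt (fun t : ℝ => F x - ν * t) (-ν) 0 := by
      simpa using ((hasDerivAt_id (0:ℝ)).const_mul ν).const_sub (F x)
    have heq : (fun t : ℝ => F (Real.exp t • x)) = fun t : ℝ => F x - ν * t :=
      funext fun t => hhom x hx t
    rw [heq] at h1
    exact h1.unique h2
  -- gradient homogeneity
  have grad_hom : ∀ t : ℝ, ∀ w : Euc (n+1),
      fderiv ℝ F (Real.exp t • x) w = Real.exp (-t) * fderiv ℝ F x w := by
    intro t w
    have h1 : (fun y => F (Real.exp t • y)) =ᶠ[nhds x] (fun y => F y - ν * t) := by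
      filter_upwards [hx_nhds] with y hy using hhom y hy t
    have hlin : HasFDerivAt (fun y : Euc (n+1) => Real.exp t • y)
        (Real.exp t • ContinuousLinearMap.id ℝ (Euc (n+1))) x := by
      exact (ContinuousLinearMap.id ℝ (Euc (n+1))).hasFDerivAt.const_smul (Real.exp t)
    have hFd : HasFDerivAt F (fderiv ℝ F (Real.exp t • x)) (Real.exp t • x) :=
      (hdiff _ (hcone x hx t)).hasFDerivAt
    have hcomp := hFd.comp x hlin
    have hrhs : HasFDerivAt (fun y => F y - ν * t) (fderiv ℝ F x) x := by
      simpa using (hdiff x hx).hasFDerivAt.sub_const (ν * t)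
    have := (h1.hasFDerivAt_iff.mp hcomp).unique hrhs
    have happ := congrArg (fun L : Euc (n+1) →L[ℝ] ℝ => L w) this
    simp only [ContinuousLinearMap.comp_apply, ContinuousLinearMap.smul_apply,
      ContinuousLinearMap.id_apply, map_smul, smul_eq_mul] at happ
    have hexp : Real.exp t ≠ 0 := Real.exp_ne_zero t
    rw [Real.exp_neg]
    field_simp at happ ⊢
    linarith [happ]
  -- Euler identity 2 : B x w = -(fderiv F x w)
  have euler2 : ∀ w : Euc (n+1), B x w = -(fderiv ℝ F x w) := by
    intro w
    have hdF : HasFDerivAt (fderiv ℝ F) B ((fun t : ℝ => Real.exp t • x) 0) := by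
      have h1 : ContDiffAt ℝ 1 (fderiv ℝ F) x := hFx.fderiv_right (by norm_num)
      simpa using (h1.differentiableAt one_ne_zero).hasFDerivAt
    have h2 : HasDerivAt (fun t : ℝ => fderiv ℝ F (Real.exp t • x)) (B x) 0 := by
      simpa [Function.comp_def] using hdF.comp_hasDerivAt 0 hc
    have h3 : HasDerivAt (fun t : ℝ => fderiv ℝ F (Real.exp t • x) w) (B x w) 0 :=
      h2.clm_apply (hasDerivAt_const 0 w) |>.congr_deriv (by simp)
    have h4 : HasDerivAt (fun t : ℝ => Real.exp (-t) * fderiv ℝ F x w)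
        (-(fderiv ℝ F x w)) 0 := by
      have he : HasDerivAt (fun t : ℝ => Real.exp (-t)) (-1) 0 := by
        have h := (Real.hasDerivAt_exp (-(0:ℝ))).comp 0 ((hasDerivAt_id (0:ℝ)).neg)
        simpa [Function.comp_def] using h
      simpa using he.mul_const (fderiv ℝ F x w)
    have heq : (fun t : ℝ => fderiv ℝ F (Real.exp t • x) w)
        = fun t : ℝ => Real.exp (-t) * fderiv ℝ F x w := funext fun t => grad_hom t w
    rw [heq] at h3
    exact h3.unique h4
  -- expansion of B in the standard basis, and positive semidefiniteness
  have hBpsd : ∀ w : Euc (n+1), 0 ≤ B w w := by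
    intro w
    have hrepr : ∀ u : Euc (n+1), u = ∑ i, u i • EuclideanSpace.single i (1:ℝ) := by
      intro u
      have h := (EuclideanSpace.basisFun (Fin (n+1)) ℝ).sum_repr u
      simp only [EuclideanSpace.basisFun_apply, EuclideanSpace.basisFun_repr] at h
      exact h.symm
    have hM : ∀ i j, hessMatrix F x i j = B (EuclideanSpace.single i 1) (EuclideanSpace.single j 1) := by
      intro i j
      rw [hessMatrix, iteratedFDeriv_two_apply]
      simp [hBdef]
    have hexp : B w w = ∑ i, ∑ j, w i * (hessMatrix F x i j * w j) := by
      conv_lhs => rw [hrepr w]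
      simp only [map_sum, map_smul, ContinuousLinearMap.sum_apply,
        ContinuousLinearMap.smul_apply, smul_eq_mul, Finset.mul_sum]
      refine Finset.sum_congr rfl fun i _ => Finset.sum_congr rfl fun j _ => ?_
      rw [hM, hsym (EuclideanSpace.single i 1) (EuclideanSpace.single j 1)]; ring
    have hq := (hsemi x hx).dotProduct_mulVec_nonneg (fun i => w i)
    rw [hexp]
    simpa [dotProduct, Matrix.mulVec, Finset.mul_sum] using hq
  -- Cauchy–Schwarz via discriminant
  have hBxx : B x x = ν := by rw [euler2 x, euler1]; ring
  have hBxv : B x v = -(fderiv ℝ F x v) := euler2 v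
  have hquad : ∀ t : ℝ, 0 ≤ ν * (t * t) + (2 * B x v) * t + B v v := by
    intro t
    have h := hBpsd (t • x + v)
    have : B (t • x + v) (t • x + v)
        = ν * (t * t) + (2 * B x v) * t + B v v := by
      simp only [map_add, map_smul, ContinuousLinearMap.add_apply,
        ContinuousLinearMap.smul_apply, smul_eq_mul]
      rw [hsym v x, hBxx]
      ring
    linarith [this ▸ h]
  have hdisc := discrim_le_zero hquad
  rw [discrim] at hdisc
  have hBvv : iteratedFDeriv ℝ 2 F x ![v, v] = B v v := by
    rw [iteratedFDeriv_two_apply]; simp [hBdef]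
  rw [hBvv]
  have h4 : (2 * B x v) ^ 2 = 4 * (fderiv ℝ F x v) ^ 2 := by rw [hBxv]; ring
  linarith [hdisc]
end
end
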